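/- arXiv:1402.4194 — 2 statements merged into one kernel-verified Lean document; each statement's English description precedes it below -/
import Mathlib

section
/- Let $p \in (0,1)$ and $\alpha > 1$ be constants, and let $G \sim \mathcal{G}(n,p)$. There exists a constant $\beta = \beta(p,\alpha)$ such that with probability tending to 1 as $n \to \infty$, every pair of vertex subsets $X, Y \subseteq [n]$ with $|X|, |Y| > \beta \log n$ satisfies $\mathrm{bden}_G(X,Y) \leq \alpha p$. -/
/-!
Write the number of edges between `X` and `Y` as `∑ₑ wₑ Aₑ`, a weighted sum of the independent
edge indicators `Aₑ` (`e = {i, j}`, `i < j`) with weights `wₑ ∈ {0, 1, 2}` summing to at most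
`|X||Y|`. Hoeffding's inequality bounds the probability that the density exceeds `αp` by
`exp (-κ |X||Y|)`, `κ = ((α - 1) p)²`. For `|X|, |Y| > β log n` with `β = 6 / κ` this is at most
`n^-(|X|+2) n^-(|Y|+2)`, and since `∑_X n^-|X| = (1 + 1/n)ⁿ ≤ e`, a union bound over all pairs
`(X, Y)` shows that some pair is too dense with probability at most `9 / n⁴`.
-/

open MeasureTheory ProbabilityTheory Real Filter Finset
open scoped NNReal

theorem Fintype.sum_sum_eq_sum_lt_add_sum_diag {ι M : Type*} [Fintype ι] [LinearOrder ι]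
    [AddCommMonoid M] (f : ι → ι → M) :
    ∑ i, ∑ j, f i j
      = ∑ e : {e : ι × ι // e.1 < e.2}, (f e.1.1 e.1.2 + f e.1.2 e.1.1) + ∑ i, f i i := by
  have hdiag : ∑ x : ι × ι with x.1 = x.2, f x.1 x.2 = ∑ i, f i i := by
    rw [Finset.sum_filter, Fintype.sum_prod_type]
    simp
  have hgt : ∑ x : ι × ι with x.2 < x.1, f x.1 x.2 = ∑ x : ι × ι with x.1 < x.2, f x.2 x.1 :=
    Finset.sum_nbij' Prod.swap Prod.swap (by simp) (by simp) (by simp) (by simp) (by simp)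
  have hge : ∑ x : ι × ι with ¬ x.1 < x.2, f x.1 x.2
      = ∑ x : ι × ι with x.2 < x.1, f x.1 x.2 + ∑ x : ι × ι with x.1 = x.2, f x.1 x.2 := by
    rw [← Finset.sum_union (Finset.disjoint_filter.2 fun x _ h h' => h.ne' h')]
    congr 1
    ext x
    simp [le_iff_lt_or_eq, eq_comm]
  rw [← Fintype.sum_prod_type', ← Finset.sum_filter_add_sum_filter_not _ fun x => x.1 < x.2,
    hge, hgt, hdiag, ← add_assoc, ← Finset.sum_add_distrib,
    Finset.sum_subtype (p := fun x : ι × ι => x.1 < x.2) _ (by simp)]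

lemma ProbabilityTheory.HasSubgaussianMGF.mono {Ω : Type*} [MeasurableSpace Ω] {μ : Measure Ω}
    {X : Ω → ℝ} {c c' : ℝ≥0} (h : HasSubgaussianMGF X c μ) (hc : c ≤ c') :
    HasSubgaussianMGF X c' μ where
  integrable_exp_mul := h.integrable_exp_mul
  mgf_le t := (h.mgf_le t).trans <| exp_le_exp.2 <| by gcongr

theorem ProbabilityTheory.measureReal_sum_sub_integral_ge_le {Ω ι : Type*} [MeasurableSpace Ω]
    {μ : Measure Ω} [IsProbabilityMeasure μ] [Fintype ι] {Z : ι → Ω → ℝ} (hind : iIndepFun Z μ)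
    (hmeas : ∀ i, AEMeasurable (Z i) μ) {a b : ι → ℝ}
    (hZ : ∀ i, ∀ᵐ ω ∂μ, Z i ω ∈ Set.Icc (a i) (b i)) {V : ℝ}
    (hV : ∑ i, (b i - a i) ^ 2 ≤ V) {ε : ℝ} (hε : 0 ≤ ε) :
    μ.real {ω | ε ≤ ∑ i, (Z i ω - μ[Z i])} ≤ exp (-2 * ε ^ 2 / V) := by
  have hsubG := HasSubgaussianMGF.sum_of_iIndepFun (X := fun i ω => Z i ω - μ[Z i])
    (hind.comp (fun i (x : ℝ) => x - ∫ ω, Z i ω ∂μ) fun i => measurable_id.sub_const _)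
    (s := Finset.univ) fun i _ => hasSubgaussianMGF_of_mem_Icc (hmeas i) (hZ i)
  have hV4 : 0 ≤ V / 4 := by
    have := (Finset.sum_nonneg fun i _ => sq_nonneg (b i - a i)).trans hV
    positivity
  have hle : ∑ i, (‖b i - a i‖₊ / 2) ^ 2 ≤ (V / 4).toNNReal := by
    rw [← NNReal.coe_le_coe, Real.coe_toNNReal _ hV4]
    push_cast
    simp only [Real.norm_eq_abs, div_pow, sq_abs, ← Finset.sum_div]
    linarith
  calc μ.real {ω | ε ≤ ∑ i, (Z i ω - μ[Z i])} ≤ exp (-ε ^ 2 / (2 * (V / 4))) := by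
        simpa [Real.coe_toNNReal _ hV4] using (hsubG.mono hle).measure_ge_le hε
    _ = exp (-2 * ε ^ 2 / V) := by ring_nf

lemma integral_eq_measureReal_of_zero_or_one {Ω : Type*} [MeasurableSpace Ω] {μ : Measure Ω}
    {B : Ω → ℝ} (hB : Measurable B) (h01 : ∀ ω, B ω = 0 ∨ B ω = 1) :
    ∫ ω, B ω ∂μ = μ.real {ω | B ω = 1} := by
  have hind : B = Set.indicator {ω | B ω = 1} 1 := by
    funext ω
    rcases h01 ω with h | h <;> simp [h]
  conv_lhs => rw [hind]
  exact integral_indicator_one (hB (measurableSet_singleton 1))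

lemma sum_inv_card_pow_card_add_two_le (V : Type*) [Fintype V] [Nonempty V] :
    ∑ X : Finset V, ((Fintype.card V : ℝ)⁻¹) ^ (#X + 2) ≤ 3 / (Fintype.card V : ℝ) ^ 2 := by
  set n := Fintype.card V
  have hn : (0 : ℝ) < n := Nat.cast_pos.2 Fintype.card_pos
  have hbinom : ∑ X : Finset V, ((n : ℝ)⁻¹) ^ #X = ((n : ℝ)⁻¹ + 1) ^ n := by
    simpa using Fintype.sum_pow_mul_eq_add_pow V (n : ℝ)⁻¹ 1
  have hexp : ((n : ℝ)⁻¹ + 1) ^ n ≤ 3 :=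
    calc ((n : ℝ)⁻¹ + 1) ^ n ≤ exp (n : ℝ)⁻¹ ^ n := by
          gcongr
          exact add_one_le_exp _
      _ = exp 1 := by rw [← exp_nat_mul, mul_inv_cancel₀ hn.ne']
      _ ≤ 3 := exp_one_lt_d9.le.trans (by norm_num)
  calc ∑ X : Finset V, ((n : ℝ)⁻¹) ^ (#X + 2) = ((n : ℝ)⁻¹) ^ 2 * ((n : ℝ)⁻¹ + 1) ^ n := by
        simp only [pow_add, ← hbinom, Finset.mul_sum, mul_comm]
    _ ≤ ((n : ℝ)⁻¹) ^ 2 * 3 := by gcongr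
    _ = 3 / (n : ℝ) ^ 2 := by field_simp

lemma exp_neg_mul_le_inv_pow_mul_inv_pow {κ : ℝ} (hκ : 0 < κ) {n x y : ℕ} (hn : 0 < n)
    (hx : 6 / κ * log n < x) (hy : 6 / κ * log n < y) :
    exp (-κ * (x * y)) ≤ ((n : ℝ)⁻¹) ^ (x + 2) * ((n : ℝ)⁻¹) ^ (y + 2) := by
  have hL : 0 ≤ log n := log_natCast_nonneg n
  have one_le : ∀ k : ℕ, 6 / κ * log n < k → (1 : ℝ) ≤ k := fun k hk =>
    Nat.one_le_cast.2 <| Nat.cast_pos.1 <| lt_of_le_of_lt (by positivity) hk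
  have hinv : ∀ k : ℕ, ((n : ℝ)⁻¹) ^ k = exp (-(k * log n)) := fun k => by
    rw [exp_neg, exp_nat_mul, exp_log (by exact_mod_cast hn), inv_pow]
  have hxL : 6 * log n * x ≤ κ * (x * y) := by
    have := mul_le_mul_of_nonneg_left hy.le (by positivity : (0 : ℝ) ≤ κ * x)
    field_simp at this ⊢
    linarith
  have hyL : 6 * log n * y ≤ κ * (x * y) := by
    have := mul_le_mul_of_nonneg_left hx.le (by positivity : (0 : ℝ) ≤ κ * y)
    field_simp at this ⊢
    linarith
  rw [hinv, hinv, ← exp_add, exp_le_exp]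
  push_cast
  nlinarith [one_le x hx, one_le y hy]

noncomputable def bipartiteDensity {V : Type*} (M : V → V → ℝ) (X Y : Finset V) : ℝ :=
  (∑ i ∈ X, ∑ j ∈ Y, M i j) / ((#X : ℝ) * #Y)

section EdgeWeight

variable {V : Type*} [LinearOrder V]

def edgeWeight (X Y : Finset V) (i j : V) : ℝ :=
  (if i ∈ X ∧ j ∈ Y then 1 else 0) + (if j ∈ X ∧ i ∈ Y then 1 else 0)

lemma edgeWeight_mem_Icc (X Y : Finset V) (i j : V) : edgeWeight X Y i j ∈ Set.Icc 0 2 := by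
  unfold edgeWeight
  constructor <;> split_ifs <;> norm_num

lemma sum_sum_eq_sum_edgeWeight_mul_add [Fintype V] {M : V → V → ℝ}
    (hM : ∀ i j, M i j = M j i) (X Y : Finset V) :
    ∑ i ∈ X, ∑ j ∈ Y, M i j
      = ∑ e : {e : V × V // e.1 < e.2}, edgeWeight X Y e.1.1 e.1.2 * M e.1.1 e.1.2
        + ∑ i ∈ X ∩ Y, M i i := by
  have hrestrict : ∑ i ∈ X, ∑ j ∈ Y, M i j = ∑ i, ∑ j, if i ∈ X ∧ j ∈ Y then M i j else 0 := by
    simp [ite_and]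
  have hdiag : ∑ i, (if i ∈ X ∧ i ∈ Y then M i i else 0) = ∑ i ∈ X ∩ Y, M i i := by
    rw [← Finset.sum_filter]
    congr 1
    ext
    simp
  rw [hrestrict, Fintype.sum_sum_eq_sum_lt_add_sum_diag, hdiag]
  congr 1
  refine Finset.sum_congr rfl fun e _ => ?_
  rw [hM e.1.2 e.1.1, edgeWeight]
  split_ifs <;> ring

lemma sum_edgeWeight_le [Fintype V] (X Y : Finset V) :
    ∑ e : {e : V × V // e.1 < e.2}, edgeWeight X Y e.1.1 e.1.2 ≤ (#X : ℝ) * #Y := by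
  have h := sum_sum_eq_sum_edgeWeight_mul_add (M := fun _ _ => (1 : ℝ)) (fun _ _ => rfl) X Y
  simp only [mul_one, Finset.sum_const, nsmul_eq_mul] at h
  have : (0 : ℝ) ≤ #(X ∩ Y) := Nat.cast_nonneg _
  linarith

end EdgeWeight

structure IsErdosRenyi {Ω V : Type*} [MeasurableSpace Ω] [LinearOrder V] (μ : Measure Ω)
    (p : ℝ) (A : Ω → V → V → ℝ) : Prop where
  symm : ∀ ω i j, A ω i j = A ω j i
  diag : ∀ ω i, A ω i i = 0
  zero_or_one : ∀ ω i j, A ω i j = 0 ∨ A ω i j = 1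
  measurable : ∀ i j, Measurable fun ω => A ω i j
  measureReal_edge : ∀ i j, i ≠ j → μ.real {ω | A ω i j = 1} = p
  iIndepFun_edges : iIndepFun (fun (e : {e : V × V // e.1 < e.2}) ω => A ω e.1.1 e.1.2) μ

namespace IsErdosRenyi

variable {Ω V : Type*} [MeasurableSpace Ω] {μ : Measure Ω} [IsProbabilityMeasure μ]
  [Fintype V] [LinearOrder V] {p : ℝ} {A : Ω → V → V → ℝ}

theorem measureReal_lt_bipartiteDensity_le (hA : IsErdosRenyi μ p A) (hp : 0 ≤ p) {α : ℝ}
    (hα : 1 ≤ α) (X Y : Finset V) :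
    μ.real {ω | α * p < bipartiteDensity (A ω) X Y}
      ≤ exp (-((α - 1) * p) ^ 2 * ((#X : ℝ) * #Y)) := by
  set N : ℝ := (#X : ℝ) * #Y
  set w : {e : V × V // e.1 < e.2} → ℝ := fun e => edgeWeight X Y e.1.1 e.1.2
  set Z : {e : V × V // e.1 < e.2} → Ω → ℝ := fun e ω => w e * A ω e.1.1 e.1.2
  have hind : iIndepFun Z μ :=
    hA.iIndepFun_edges.comp (fun e x => w e * x) fun e => measurable_const_mul _
  have hZ : ∀ e ω, Z e ω ∈ Set.Icc 0 (w e) := by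
    intro e ω
    have hw := (edgeWeight_mem_Icc X Y e.1.1 e.1.2).1
    rcases hA.zero_or_one ω e.1.1 e.1.2 with h | h <;> simp [Z, w, h, hw]
  have hmean : ∀ e, μ[Z e] = w e * p := by
    intro e
    rw [integral_const_mul, integral_eq_measureReal_of_zero_or_one (hA.measurable _ _)
      (fun ω => hA.zero_or_one ω _ _), hA.measureReal_edge _ _ e.2.ne]
  have hV : ∑ e, (w e - 0) ^ 2 ≤ 2 * N :=
    calc ∑ e, (w e - 0) ^ 2 ≤ ∑ e, 2 * w e := by
          refine Finset.sum_le_sum fun e _ => ?_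
          have hw := edgeWeight_mem_Icc X Y e.1.1 e.1.2
          nlinarith [hw.1, hw.2]
      _ ≤ 2 * N := by rw [← Finset.mul_sum]; linarith [sum_edgeWeight_le X Y]
  have hsub : {ω | α * p < bipartiteDensity (A ω) X Y}
      ⊆ {ω | (α - 1) * p * N ≤ ∑ e, (Z e ω - μ[Z e])} := by
    intro ω hω
    have hN : 0 < N := by
      by_contra hN
      change α * p < (∑ i ∈ X, ∑ j ∈ Y, A ω i j) / N at hω
      rw [le_antisymm (not_lt.1 hN) (by positivity), div_zero] at hω
      nlinarith
    have hS := sum_sum_eq_sum_edgeWeight_mul_add (hA.symm ω) X Y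
    simp only [hA.diag, Finset.sum_const_zero, add_zero] at hS
    have hlt : α * p * N < ∑ i ∈ X, ∑ j ∈ Y, A ω i j := (lt_div_iff₀ hN).1 hω
    simp only [Set.mem_ofPred_eq, hmean, Finset.sum_sub_distrib, ← Finset.sum_mul]
    nlinarith [sum_edgeWeight_le X Y]
  calc μ.real {ω | α * p < bipartiteDensity (A ω) X Y}
      ≤ μ.real {ω | (α - 1) * p * N ≤ ∑ e, (Z e ω - μ[Z e])} := measureReal_mono hsub
    _ ≤ exp (-2 * ((α - 1) * p * N) ^ 2 / (2 * N)) :=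
        measureReal_sum_sub_integral_ge_le hind
          (fun e => ((measurable_const_mul _).comp (hA.measurable _ _)).aemeasurable)
          (fun e => ae_of_all _ (hZ e)) hV (by have := sub_nonneg.2 hα; positivity)
    _ = exp (-((α - 1) * p) ^ 2 * N) := by
        rcases eq_or_ne N 0 with hN | hN
        · simp [hN]
        · field_simp

theorem one_sub_le_measureReal_forall_bipartiteDensity_le [Nonempty V]
    (hA : IsErdosRenyi μ p A) (hp : 0 < p) {α : ℝ} (hα : 1 < α) :
    1 - 9 / (Fintype.card V : ℝ) ^ 4 ≤ μ.real {ω | ∀ X Y : Finset V,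
      6 / ((α - 1) * p) ^ 2 * log (Fintype.card V) < #X →
      6 / ((α - 1) * p) ^ 2 * log (Fintype.card V) < #Y →
      bipartiteDensity (A ω) X Y ≤ α * p} := by
  set n := Fintype.card V
  set κ := ((α - 1) * p) ^ 2
  have hκ : 0 < κ := by have := sub_pos.2 hα; positivity
  set good := {ω | ∀ X Y : Finset V, 6 / κ * log n < #X → 6 / κ * log n < #Y →
      bipartiteDensity (A ω) X Y ≤ α * p}
  set bad : Finset V → Finset V → Set Ω := fun X Y =>
    {ω | 6 / κ * log n < #X ∧ 6 / κ * log n < #Y ∧ α * p < bipartiteDensity (A ω) X Y}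
  set u : Finset V → ℝ := fun X => ((n : ℝ)⁻¹) ^ (#X + 2)
  have hcompl : goodᶜ = ⋃ X, ⋃ Y, bad X Y := by
    ext ω
    simp [good, bad]
  have hbad : ∀ X Y, μ.real (bad X Y) ≤ u X * u Y := by
    intro X Y
    by_cases hsize : 6 / κ * log n < #X ∧ 6 / κ * log n < #Y
    · calc μ.real (bad X Y) ≤ μ.real {ω | α * p < bipartiteDensity (A ω) X Y} :=
            measureReal_mono fun ω hω => hω.2.2
        _ ≤ exp (-κ * ((#X : ℝ) * #Y)) :=
            hA.measureReal_lt_bipartiteDensity_le hp.le hα.le X Y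
        _ ≤ u X * u Y :=
            exp_neg_mul_le_inv_pow_mul_inv_pow hκ Fintype.card_pos hsize.1 hsize.2
    · have hempty : bad X Y = ∅ :=
        Set.eq_empty_of_forall_notMem fun ω hω => hsize ⟨hω.1, hω.2.1⟩
      simp only [hempty, measureReal_empty, u]
      positivity
  have hcompl_le : μ.real goodᶜ ≤ 9 / (n : ℝ) ^ 4 :=
    calc μ.real goodᶜ ≤ ∑ X, ∑ Y, μ.real (bad X Y) := by
          rw [hcompl]
          exact (measureReal_iUnion_fintype_le _).trans
            (Finset.sum_le_sum fun X _ => measureReal_iUnion_fintype_le _)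
      _ ≤ ∑ X, ∑ Y, u X * u Y := by gcongr with X _ Y _; exact hbad X Y
      _ = (∑ X, u X) ^ 2 := by rw [sq, Finset.sum_mul_sum]
      _ ≤ (3 / (n : ℝ) ^ 2) ^ 2 := by gcongr; exact sum_inv_card_pow_card_add_two_le V
      _ = 9 / (n : ℝ) ^ 4 := by ring
  have hunion : 1 ≤ μ.real good + μ.real goodᶜ := by
    simpa using measureReal_union_le (μ := μ) good goodᶜ
  linarith

end IsErdosRenyi

theorem bidensity_whp_general
    (p : ℝ) (hp0 : 0 < p) (α : ℝ) (hα : 1 < α)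
    (Ω : ℕ → Type) (inst : ∀ n, MeasureSpace (Ω n))
    (hprob : ∀ n, IsProbabilityMeasure (ℙ : Measure (Ω n)))
    (A : ∀ n, Ω n → Fin n → Fin n → ℝ)
    (hsym : ∀ n ω i j, A n ω i j = A n ω j i)
    (hdiag : ∀ n ω i, A n ω i i = 0)
    (h01 : ∀ n ω i j, A n ω i j = 0 ∨ A n ω i j = 1)
    (hmeas : ∀ n i j, Measurable (fun ω => A n ω i j))
    (hedge : ∀ n (i j : Fin n), i ≠ j → (ℙ {ω | A n ω i j = 1}).toReal = p)
    (hindep : ∀ n, iIndepFun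
      (fun (e : {e : Fin n × Fin n // e.1 < e.2}) ω => A n ω e.1.1 e.1.2) ℙ) :
    ∃ β : ℝ, 0 < β ∧
      Tendsto (fun n => (ℙ {ω : Ω n | ∀ X Y : Finset (Fin n),
          β * Real.log n < X.card → β * Real.log n < Y.card →
          (∑ i ∈ X, ∑ j ∈ Y, A n ω i j) / (X.card * Y.card) ≤ α * p}).toReal)
        atTop (nhds 1) := by
  refine ⟨6 / ((α - 1) * p) ^ 2, by have := sub_pos.2 hα; positivity, ?_⟩
  have hlower : Tendsto (fun n : ℕ => 1 - 9 / (n : ℝ) ^ 4) atTop (nhds 1) := by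
    simpa using tendsto_const_nhds.sub (tendsto_const_div_atTop_nhds_zero_nat (9 : ℝ)
      |>.comp (tendsto_pow_atTop four_ne_zero) |>.congr fun n => by simp)
  refine tendsto_of_tendsto_of_tendsto_of_le_of_le' hlower tendsto_const_nhds ?_
    (Eventually.of_forall fun n => measureReal_le_one)
  filter_upwards [eventually_gt_atTop 0] with n hn
  have : Nonempty (Fin n) := ⟨⟨0, hn⟩⟩
  have h := IsErdosRenyi.one_sub_le_measureReal_forall_bipartiteDensity_le
    ⟨hsym n, hdiag n, h01 n, hmeas n, hedge n, hindep n⟩ hp0 hα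
  rw [Fintype.card_fin] at h
  exact h

/-- In `G(n,p)` with constant `p ∈ (0,1)` and constant `α > 1`, there is a constant
`β = β(p,α)` so that with probability tending to `1`, every pair of clusters `X, Y`
with `|X|, |Y| > β log n` has bipartite density at most `α p`. -/
theorem bidensity_whp
    (p : ℝ) (hp0 : 0 < p) (hp1 : p < 1) (α : ℝ) (hα : 1 < α)
    (Ω : ℕ → Type) (inst : ∀ n, MeasureSpace (Ω n))
    (hprob : ∀ n, IsProbabilityMeasure (ℙ : Measure (Ω n)))
    (A : ∀ n, Ω n → Fin n → Fin n → ℝ)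
    (hsym : ∀ n ω i j, A n ω i j = A n ω j i)
    (hdiag : ∀ n ω i, A n ω i i = 0)
    (h01 : ∀ n ω i j, A n ω i j = 0 ∨ A n ω i j = 1)
    (hmeas : ∀ n i j, Measurable (fun ω => A n ω i j))
    (hedge : ∀ n (i j : Fin n), i ≠ j → (ℙ {ω | A n ω i j = 1}).toReal = p)
    (hindep : ∀ n, iIndepFun
      (fun (e : {e : Fin n × Fin n // e.1 < e.2}) ω => A n ω e.1.1 e.1.2) ℙ) :
    ∃ β : ℝ, 0 < β ∧
      Tendsto (fun n => (ℙ {ω : Ω n | ∀ X Y : Finset (Fin n),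
          β * Real.log n < X.card → β * Real.log n < Y.card →
          (∑ i ∈ X, ∑ j ∈ Y, A n ω i j) / (X.card * Y.card) ≤ α * p}).toReal)
        atTop (nhds 1) :=
  bidensity_whp_general p hp0 α hα Ω inst hprob A hsym hdiag h01 hmeas hedge hindep
end

section
/- Consider the network security game on a graph $G=(V,E)$ with adjacency matrix $A$, defender budget $d$, and penalty $\rho$. For any subgame where the state of nature is uniformly distributed over a set $\hat{S} \subseteq V$, if the attacker plays the uniform distribution over $\hat{S}$, then against every pure defender strategy $D$ with $|D| \leq d$, the attacker's expected payoff is at least $\mathrm{bden}(\hat{S},\hat{S}) - 2d\rho/|\hat{S}|$. -/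
/-- In the network security game, when the state of nature is uniform on `Ŝ` and the
attacker plays uniformly on `Ŝ`, every pure defender strategy `D` with `|D| ≤ d`
leaves the attacker expected payoff at least `bden(Ŝ,Ŝ) - 2dρ/|Ŝ|`. -/
theorem security_game_uniform_attack_payoff
    (n : ℕ) (A : Fin n → Fin n → ℝ)
    (Shat D : Finset (Fin n)) (hS : Shat.Nonempty)
    (d : ℕ) (ρ : ℝ) (hρ : 0 ≤ ρ) (hD : D.card ≤ d) :
    (1 / ((Shat.card : ℝ) ^ 2)) *
        ∑ θ ∈ Shat, ∑ a ∈ Shat, (A θ a - ρ * ((D ∩ {θ, a}).card : ℝ)) ≥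
      (1 / ((Shat.card : ℝ) ^ 2)) * (∑ θ ∈ Shat, ∑ a ∈ Shat, A θ a) -
        2 * d * ρ / Shat.card := by
  have hs : (0:ℝ) < (Shat.card : ℝ) := by
    exact_mod_cast Finset.card_pos.mpr hS
  -- pointwise bound on the intersection card
  have hpt : ∀ θ a : Fin n, ((D ∩ {θ, a}).card : ℝ)
      ≤ (if θ ∈ D then (1:ℝ) else 0) + (if a ∈ D then (1:ℝ) else 0) := by
    intro θ a
    have h1 : (D ∩ {θ, a}).card ≤ (D ∩ {θ}).card + (D ∩ {a}).card := by
      have : D ∩ {θ, a} = (D ∩ {θ}) ∪ (D ∩ {a}) := by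
        rw [← Finset.inter_union_distrib_left]
        congr 1
      rw [this]
      exact Finset.card_union_le _ _
    have h2 : ∀ x : Fin n, ((D ∩ {x}).card : ℝ) = if x ∈ D then (1:ℝ) else 0 := by
      intro x
      by_cases hx : x ∈ D
      · simp [Finset.inter_singleton_of_mem hx, hx]
      · simp [Finset.inter_singleton_of_notMem hx, hx]
    calc ((D ∩ {θ, a}).card : ℝ) ≤ ((D ∩ {θ}).card : ℝ) + ((D ∩ {a}).card : ℝ) := by
          exact_mod_cast h1
      _ = (if θ ∈ D then (1:ℝ) else 0) + (if a ∈ D then (1:ℝ) else 0) := by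
          rw [h2, h2]
  have hboole : ∑ x ∈ Shat, (if x ∈ D then (1:ℝ) else 0) = ((Shat ∩ D).card : ℝ) := by
    rw [Finset.sum_boole, Finset.filter_mem_eq_inter]
  have hcd : ((Shat ∩ D).card : ℝ) ≤ (d : ℝ) := by
    exact_mod_cast le_trans (Finset.card_le_card (Finset.inter_subset_right)) hD
  have key : ∑ θ ∈ Shat, ∑ a ∈ Shat, ((D ∩ {θ, a}).card : ℝ)
      ≤ 2 * d * (Shat.card : ℝ) := by
    calc ∑ θ ∈ Shat, ∑ a ∈ Shat, ((D ∩ {θ, a}).card : ℝ)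
        ≤ ∑ θ ∈ Shat, ∑ a ∈ Shat,
            ((if θ ∈ D then (1:ℝ) else 0) + (if a ∈ D then (1:ℝ) else 0)) := by
          apply Finset.sum_le_sum; intro θ _
          apply Finset.sum_le_sum; intro a _
          exact hpt θ a
      _ = (Shat.card : ℝ) * ((Shat ∩ D).card : ℝ)
            + (Shat.card : ℝ) * ((Shat ∩ D).card : ℝ) := by
          have hrow : ∀ θ ∈ Shat,
              ∑ a ∈ Shat, ((if θ ∈ D then (1:ℝ) else 0) + (if a ∈ D then (1:ℝ) else 0))
              = (Shat.card : ℝ) * (if θ ∈ D then (1:ℝ) else 0) + ((Shat ∩ D).card : ℝ) := by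
            intro θ _
            rw [Finset.sum_add_distrib, Finset.sum_const, hboole, nsmul_eq_mul]
          rw [Finset.sum_congr rfl hrow, Finset.sum_add_distrib, Finset.sum_const,
            ← Finset.mul_sum, hboole, nsmul_eq_mul]
      _ ≤ (Shat.card : ℝ) * (d : ℝ) + (Shat.card : ℝ) * (d : ℝ) := by
          have := mul_le_mul_of_nonneg_left hcd (le_of_lt hs)
          linarith
      _ = 2 * d * (Shat.card : ℝ) := by ring
  have hsum : ∑ θ ∈ Shat, ∑ a ∈ Shat, (A θ a - ρ * ((D ∩ {θ, a}).card : ℝ))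
      = (∑ θ ∈ Shat, ∑ a ∈ Shat, A θ a)
        - ρ * ∑ θ ∈ Shat, ∑ a ∈ Shat, ((D ∩ {θ, a}).card : ℝ) := by
    rw [Finset.mul_sum]
    rw [← Finset.sum_sub_distrib]
    congr 1; ext θ
    rw [Finset.mul_sum, ← Finset.sum_sub_distrib]
  rw [hsum, ge_iff_le, sub_le_iff_le_add, mul_sub, sub_add_eq_add_sub,
    le_sub_iff_add_le, add_le_add_iff_left]
  have h1 : 2 * (d:ℝ) * ρ / (Shat.card : ℝ)
      = (1 / ((Shat.card : ℝ) ^ 2)) * (ρ * (2 * d * (Shat.card : ℝ))) := by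
    field_simp
  rw [h1]
  apply mul_le_mul_of_nonneg_left _ (by positivity)
  exact mul_le_mul_of_nonneg_left key hρ
end
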